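/- Let ψ be a critical branching mechanism (ψ'(0+) = 0) satisfying ∫^∞ 1/ψ < ∞, φ(λ) = ∫_λ^∞ 1/ψ(u) du with inverse φ̂. Then for every λ > 0, lim_{t→∞} [φ̂(t) - φ̂(t + φ(λ))] / ψ(φ̂(t)) = φ(λ). -/

import Mathlib

/-! Write `b = φ̂(t)` and `a = φ̂(t + φ(λ))`, so that `φ(λ) = φ(a) - φ(b) = ∫_a^b 1/ψ`. The
Lévy–Khintchine formula makes `ψ` convex and nonnegative on `[0, ∞)` with `ψ(0) = 0`, hence
increasing, so this integral lies between `(b - a)/ψ(b)` and `(b - a)/ψ(a)`. The first bound is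
the upper bound `φ(λ)` for the quotient. Convexity also gives `ψ(b) - ψ(a) ≤ (b - a) ψ(2b)/b`,
which turns the second bound into the lower bound `φ(λ) - φ(λ)² ψ(2b)/b`; since `φ̂(t) → 0+`
and, in the critical case, `ψ(u)/u → 0` as `u → 0+`, this lower bound tends to `φ(λ)` too. -/

open MeasureTheory Set Filter

/-- A branching mechanism given by the Lévy–Khintchine formula. -/
def LevyMechanism (α σ : ℝ) (π : Measure ℝ) (ψ : ℝ → ℝ) : Prop :=
  0 ≤ σ ∧
  Integrable (fun r => min r (r ^ 2)) (π.restrict (Set.Ioi 0)) ∧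
  ∀ l : ℝ, ψ l = α * l + σ ^ 2 / 2 * l ^ 2 +
      ∫ r in Set.Ioi 0, (Real.exp (-l * r) - 1 + l * r) ∂π

open Topology

namespace ConvexOn

variable {f : ℝ → ℝ}

lemma monotoneOn_of_isMinOn {a : ℝ} (hf : ConvexOn ℝ (Ici a) f) (hmin : IsMinOn f (Ici a) a) :
    MonotoneOn f (Ici a) := by
  intro x (hx : a ≤ x) y hy hxy
  rcases hx.eq_or_lt with rfl | hax
  · exact hmin hy
  rcases hxy.eq_or_lt with rfl | hxy
  · exact le_rfl
  have hslope := hf.slope_mono_adjacent self_mem_Ici hy hax hxy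
  have hleft : 0 ≤ (f x - f a) / (x - a) := div_nonneg (sub_nonneg.2 (hmin hx)) (by linarith)
  rcases div_nonneg_iff.1 (hleft.trans hslope) with ⟨h, -⟩ | ⟨-, h⟩ <;> linarith

lemma sub_le_mul_div_of_lt (hf : ConvexOn ℝ (Ici 0) f) {a b : ℝ} (ha : 0 ≤ a) (hab : a < b)
    (hfb : 0 ≤ f b) : f b - f a ≤ (b - a) * (f (2 * b) / b) := by
  have hb : 0 < b := ha.trans_lt hab
  have hslope := hf.slope_mono_adjacent ha (by simp only [mem_Ici]; linarith) hab
    (by linarith : b < 2 * b)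
  rw [show 2 * b - b = b by ring] at hslope
  have hslope' : (f b - f a) / (b - a) ≤ f (2 * b) / b :=
    hslope.trans (div_le_div_of_nonneg_right (by linarith) hb.le)
  rwa [div_le_iff₀' (sub_pos.2 hab)] at hslope'

lemma sub_sq_mul_le_sub_div (hf : ConvexOn ℝ (Ici 0) f) (hpos : ∀ x > 0, 0 < f x) {a b s : ℝ}
    (ha : 0 < a) (hab : a < b) (hsab : s ∈ Icc ((b - a) / f b) ((b - a) / f a)) :
    s - s ^ 2 * (f (2 * b) / b) ≤ (b - a) / f b := by
  have hb : 0 < b := ha.trans hab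
  have hfa := hpos a ha
  have hfb := hpos b hb
  have hs : 0 ≤ s := (div_pos (sub_pos.2 hab) hfb).le.trans hsab.1
  have hE : 0 ≤ f (2 * b) / b := div_nonneg (hpos _ (by linarith)).le hb.le
  have hconv := hf.sub_le_mul_div_of_lt ha.le hab hfb.le
  have hupper : b - a ≤ s * f b := (div_le_iff₀ hfb).1 hsab.1
  have hlower : s * f a ≤ b - a := (le_div_iff₀ hfa).1 hsab.2
  rw [le_div_iff₀ hfb]
  nlinarith [mul_le_mul_of_nonneg_left hconv hs, mul_le_mul_of_nonneg_left hupper (mul_nonneg hs hE)]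

end ConvexOn

lemma exp_neg_sub_one_add_nonneg (x : ℝ) : 0 ≤ Real.exp (-x) - 1 + x := by
  linarith [Real.add_one_le_exp (-x)]

lemma exp_neg_sub_one_add_le_self {x : ℝ} (hx : 0 ≤ x) : Real.exp (-x) - 1 + x ≤ x := by
  linarith [Real.exp_le_one_iff.2 (neg_nonpos.2 hx)]

lemma exp_neg_sub_one_add_le_sq {x : ℝ} (hx : 0 ≤ x) : Real.exp (-x) - 1 + x ≤ x ^ 2 := by
  rcases le_or_gt x 1 with hx1 | hx1
  · have := Real.abs_exp_sub_one_sub_id_le (x := -x) (by rwa [abs_neg, abs_of_nonneg hx])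
    rw [neg_sq] at this
    linarith [(abs_le.1 this).2]
  · nlinarith [exp_neg_sub_one_add_le_self hx]

lemma exp_neg_mul_sub_one_add_mul_le {l r : ℝ} (hl : 0 ≤ l) (hr : 0 ≤ r) :
    Real.exp (-l * r) - 1 + l * r ≤ (l + l ^ 2) * min r (r ^ 2) := by
  rw [neg_mul]
  have hlr := mul_nonneg hl hr
  rcases le_or_gt r 1 with hr1 | hr1
  · rw [min_eq_right (by nlinarith)]
    nlinarith [exp_neg_sub_one_add_le_sq hlr, mul_nonneg hl (sq_nonneg r)]
  · rw [min_eq_left (by nlinarith)]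
    nlinarith [exp_neg_sub_one_add_le_self hlr, mul_nonneg (sq_nonneg l) hr]

lemma convexOn_exp_neg_mul_sub_one_add_mul (r : ℝ) :
    ConvexOn ℝ univ (fun l => Real.exp (-l * r) - 1 + l * r) := by
  refine ⟨convex_univ, fun x _ y _ a b ha hb hab => ?_⟩
  have hexp := convexOn_exp.2 (mem_univ (-x * r)) (mem_univ (-y * r)) ha hb hab
  simp only [smul_eq_mul] at hexp ⊢
  have : a * (-x * r) + b * (-y * r) = -(a * x + b * y) * r := by ring
  rw [this] at hexp
  nlinarith

lemma exp_neg_mul_sub_one_add_mul_nonneg (l r : ℝ) : 0 ≤ Real.exp (-l * r) - 1 + l * r := by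
  rw [neg_mul]
  exact exp_neg_sub_one_add_nonneg _

lemma tendsto_exp_neg_mul_sub_one_add_mul_div (r : ℝ) (hr : 0 ≤ r) :
    Tendsto (fun l => (Real.exp (-l * r) - 1 + l * r) / l) (𝓝[>] 0) (𝓝 0) := by
  have hupper : Tendsto (fun l => l * r ^ 2) (𝓝[>] 0) (𝓝 0) := by
    simpa using (tendsto_id.mul_const (r ^ 2)).mono_left (nhdsWithin_le_nhds (a := (0 : ℝ)))
  refine tendsto_of_tendsto_of_tendsto_of_le_of_le' tendsto_const_nhds hupper ?_ ?_ <;>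
    filter_upwards [self_mem_nhdsWithin] with l (hl : 0 < l) <;> rw [neg_mul]
  · exact div_nonneg (exp_neg_sub_one_add_nonneg _) hl.le
  · rw [div_le_iff₀ hl]
    nlinarith [exp_neg_sub_one_add_le_sq (mul_nonneg hl.le hr)]

section Levy

variable {π : Measure ℝ}

lemma integrable_exp_neg_mul_sub_one_add_mul
    (hπ : Integrable (fun r => min r (r ^ 2)) (π.restrict (Ioi 0))) {l : ℝ} (hl : 0 ≤ l) :
    Integrable (fun r => Real.exp (-l * r) - 1 + l * r) (π.restrict (Ioi 0)) := by
  refine (hπ.const_mul (l + l ^ 2)).mono (by fun_prop) ?_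
  refine (ae_restrict_iff' measurableSet_Ioi).2 (ae_of_all _ fun r (hr : 0 < r) => ?_)
  have hmin : 0 ≤ min r (r ^ 2) := le_min hr.le (sq_nonneg r)
  rw [Real.norm_of_nonneg (exp_neg_mul_sub_one_add_mul_nonneg l r),
    Real.norm_of_nonneg (by positivity)]
  exact exp_neg_mul_sub_one_add_mul_le hl hr.le

lemma convexOn_integral_exp_neg_mul_sub_one_add_mul
    (hπ : Integrable (fun r => min r (r ^ 2)) (π.restrict (Ioi 0))) :
    ConvexOn ℝ (Ici 0) (fun l => ∫ r in Ioi 0, (Real.exp (-l * r) - 1 + l * r) ∂π) :=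
  integral_convexOn_of_integrand_ae (convex_Ici 0)
    (ae_of_all _ fun r => (convexOn_exp_neg_mul_sub_one_add_mul r).subset (subset_univ _)
      (convex_Ici 0))
    fun _ hl => integrable_exp_neg_mul_sub_one_add_mul hπ hl

lemma tendsto_integral_exp_neg_mul_sub_one_add_mul_div
    (hπ : Integrable (fun r => min r (r ^ 2)) (π.restrict (Ioi 0))) :
    Tendsto (fun l => (∫ r in Ioi 0, (Real.exp (-l * r) - 1 + l * r) ∂π) / l) (𝓝[>] 0)
      (𝓝 0) := by
  have hsmall : ∀ᶠ l in 𝓝[>] (0 : ℝ), l ∈ Ioc 0 1 := Ioc_mem_nhdsGT one_pos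
  have hdom := tendsto_integral_filter_of_dominated_convergence (μ := π.restrict (Ioi 0))
    (F := fun l r => (Real.exp (-l * r) - 1 + l * r) / l) (f := fun _ => 0)
    (fun r => 2 * min r (r ^ 2)) (Eventually.of_forall fun _ => by fun_prop) ?_ (hπ.const_mul 2)
    ((ae_restrict_iff' measurableSet_Ioi).2
      (ae_of_all _ fun r (hr : 0 < r) => tendsto_exp_neg_mul_sub_one_add_mul_div r hr.le))
  · simpa only [integral_div, integral_zero] using hdom
  filter_upwards [hsmall] with l ⟨hl0, hl1⟩
  refine (ae_restrict_iff' measurableSet_Ioi).2 (ae_of_all _ fun r (hr : 0 < r) => ?_)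
  have hmin : 0 ≤ min r (r ^ 2) := le_min hr.le (sq_nonneg r)
  have hbound := exp_neg_mul_sub_one_add_mul_le hl0.le hr.le
  rw [Real.norm_of_nonneg (div_nonneg (exp_neg_mul_sub_one_add_mul_nonneg l r) hl0.le),
    div_le_iff₀ hl0]
  nlinarith [mul_nonneg (mul_nonneg hl0.le (sub_nonneg.2 hl1)) hmin]

end Levy

namespace LevyMechanism

variable {α σ : ℝ} {π : Measure ℝ} {ψ : ℝ → ℝ}

lemma apply_zero (hψ : LevyMechanism α σ π ψ) : ψ 0 = 0 := by
  simp [hψ.2.2 0]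

lemma nonneg (hψ : LevyMechanism α σ π ψ) (hα : 0 ≤ α) {l : ℝ} (hl : 0 ≤ l) : 0 ≤ ψ l := by
  rw [hψ.2.2 l]
  have := setIntegral_nonneg (μ := π) measurableSet_Ioi fun r (_ : 0 < r) =>
    exp_neg_mul_sub_one_add_mul_nonneg l r
  positivity

lemma convexOn (hψ : LevyMechanism α σ π ψ) : ConvexOn ℝ (Ici 0) ψ := by
  have hquad : ConvexOn ℝ (Ici 0) (fun l : ℝ => σ ^ 2 / 2 * l ^ 2) :=
    (convexOn_pow 2).smul (by positivity)
  have hlin : ConvexOn ℝ (Ici 0) (fun l : ℝ => α * l) :=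
    (LinearMap.mulLeft ℝ α).convexOn (convex_Ici 0)
  rw [show ψ = _ from funext hψ.2.2]
  exact (hlin.add hquad).add (convexOn_integral_exp_neg_mul_sub_one_add_mul hψ.2.1)

lemma tendsto_div_nhdsGT_zero (hψ : LevyMechanism α σ π ψ) :
    Tendsto (fun l => ψ l / l) (𝓝[>] 0) (𝓝 α) := by
  have hquad : Tendsto (fun l : ℝ => α + σ ^ 2 / 2 * l) (𝓝[>] 0) (𝓝 α) := by
    simpa using ((tendsto_id.const_mul (σ ^ 2 / 2)).const_add α).mono_left
      (nhdsWithin_le_nhds (a := (0 : ℝ)))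
  have := hquad.add (tendsto_integral_exp_neg_mul_sub_one_add_mul_div hψ.2.1)
  rw [add_zero] at this
  refine this.congr' ?_
  filter_upwards [self_mem_nhdsWithin] with l (hl : 0 < l)
  rw [hψ.2.2 l]
  field_simp

lemma monotoneOn (hψ : LevyMechanism α σ π ψ) (hα : 0 ≤ α) : MonotoneOn ψ (Ici 0) :=
  hψ.convexOn.monotoneOn_of_isMinOn fun _ hl => by
    simpa only [mem_ofPred_eq, hψ.apply_zero] using hψ.nonneg hα hl

end LevyMechanism

lemma tendsto_apply_two_mul_div {f : ℝ → ℝ} {c : ℝ}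
    (hf : Tendsto (fun x => f x / x) (𝓝[>] 0) (𝓝 c)) :
    Tendsto (fun x => f (2 * x) / x) (𝓝[>] 0) (𝓝 (2 * c)) := by
  have htwo : Tendsto (fun x : ℝ => 2 * x) (𝓝[>] 0) (𝓝[>] 0) :=
    tendsto_nhdsWithin_of_tendsto_nhds_of_eventually_within _
      (by simpa using (tendsto_id.const_mul (2 : ℝ)).mono_left (nhdsWithin_le_nhds (a := (0 : ℝ))))
      (eventually_nhdsWithin_of_forall fun x (hx : 0 < x) => mul_pos two_pos hx)
  refine ((hf.comp htwo).const_mul 2).congr' ?_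
  filter_upwards [self_mem_nhdsWithin] with x (hx : 0 < x)
  simp only [Function.comp_apply]
  field_simp

section Inverse

variable {φ φhat : ℝ → ℝ} (hanti : AntitoneOn φ (Ioi 0))
  (hφhat : ∀ t > (0 : ℝ), 0 < φhat t ∧ φ (φhat t) = t)
include hanti hφhat

lemma tendsto_phihat_nhdsGT_zero : Tendsto φhat atTop (𝓝[>] 0) := by
  refine tendsto_nhdsWithin_iff.2 ⟨tendsto_order.2 ⟨fun a ha => ?_, fun ε hε => ?_⟩, ?_⟩
  · filter_upwards [eventually_gt_atTop 0] with t ht using ha.trans (hφhat t ht).1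
  · filter_upwards [eventually_gt_atTop (φ ε), eventually_gt_atTop 0] with t hεt ht
    by_contra! hle
    have := hanti hε (hφhat t ht).1 hle
    linarith [(hφhat t ht).2]
  · filter_upwards [eventually_gt_atTop 0] with t ht using (hφhat t ht).1

lemma phihat_add_lt {t s : ℝ} (ht : 0 < t) (hs : 0 < s) : φhat (t + s) < φhat t := by
  by_contra! hle
  have := hanti (hφhat t ht).1 (hφhat (t + s) (by linarith)).1 hle
  linarith [(hφhat t ht).2, (hφhat (t + s) (by linarith)).2]

end Inverse

section Phi

variable {ψ φ : ℝ → ℝ} (hint : ∀ l > (0 : ℝ), IntegrableOn (fun v => 1 / ψ v) (Ioi l))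
  (hφ : ∀ l > (0 : ℝ), φ l = ∫ v in Ioi l, 1 / ψ v)
include hint hφ

lemma phi_sub_phi_eq_integral {x y : ℝ} (hx : 0 < x) (hxy : x ≤ y) :
    φ x - φ y = ∫ v in Ioc x y, 1 / ψ v := by
  have hsplit := setIntegral_union (Ioc_disjoint_Ioi le_rfl) measurableSet_Ioi
    ((hint x hx).mono_set Ioc_subset_Ioi_self) (hint y (hx.trans_le hxy))
  rw [Ioc_union_Ioi_eq_Ioi hxy] at hsplit
  rw [hφ x hx, hφ y (hx.trans_le hxy), hsplit, add_sub_cancel_right]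

variable (hψpos : ∀ l > (0 : ℝ), 0 < ψ l) (hmono : MonotoneOn ψ (Ioi 0))
include hψpos hmono

lemma phi_sub_phi_mem_Icc {x y : ℝ} (hx : 0 < x) (hxy : x ≤ y) :
    φ x - φ y ∈ Icc ((y - x) / ψ y) ((y - x) / ψ x) := by
  have hy : 0 < y := hx.trans_le hxy
  have hIoc : IntegrableOn (fun v => 1 / ψ v) (Ioc x y) :=
    (hint x hx).mono_set Ioc_subset_Ioi_self
  have hconst (c : ℝ) : ∫ _ in Ioc x y, c = (y - x) * c := by
    rw [setIntegral_const, Real.volume_real_Ioc_of_le hxy, smul_eq_mul]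
  rw [phi_sub_phi_eq_integral hint hφ hx hxy, ← mul_one_div (y - x) (ψ y),
    ← mul_one_div (y - x) (ψ x), ← hconst, ← hconst]
  constructor
  · refine setIntegral_mono_on (integrableOn_const measure_Ioc_lt_top.ne) hIoc measurableSet_Ioc
      fun v hv => ?_
    exact one_div_le_one_div_of_le (hψpos v (hx.trans hv.1)) (hmono (hx.trans hv.1) hy hv.2)
  · refine setIntegral_mono_on hIoc (integrableOn_const measure_Ioc_lt_top.ne) measurableSet_Ioc
      fun v hv => ?_
    exact one_div_le_one_div_of_le (hψpos x hx) (hmono hx (hx.trans hv.1) hv.1.le)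

lemma phi_strictAntiOn : StrictAntiOn φ (Ioi 0) := by
  intro x (hx : 0 < x) y (hy : 0 < y) hxy
  have hdiff := (phi_sub_phi_mem_Icc hint hφ hψpos hmono hx hxy.le).1
  have : 0 < (y - x) / ψ y := div_pos (sub_pos.2 hxy) (hψpos y hy)
  linarith

lemma phi_pos {x : ℝ} (hx : 0 < x) : 0 < φ x := by
  have hnonneg : 0 ≤ φ (x + 1) := by
    rw [hφ _ (by linarith)]
    exact setIntegral_nonneg measurableSet_Ioi fun v (hv : x + 1 < v) =>
      (one_div_pos.2 (hψpos v (by linarith))).le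
  linarith [phi_strictAntiOn hint hφ hψpos hmono hx (show 0 < x + 1 by linarith)
    (lt_add_one x)]

variable {φhat : ℝ → ℝ} (hφhat : ∀ t > (0 : ℝ), 0 < φhat t ∧ φ (φhat t) = t)
include hφhat

lemma mem_Icc_phihat_sub_phihat {t s : ℝ} (ht : 0 < t) (hs : 0 < s) :
    s ∈ Icc ((φhat t - φhat (t + s)) / ψ (φhat t))
      ((φhat t - φhat (t + s)) / ψ (φhat (t + s))) := by
  obtain ⟨hpos, hφ_add⟩ := hφhat (t + s) (by linarith)
  have hmem := phi_sub_phi_mem_Icc hint hφ hψpos hmono hpos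
    (phihat_add_lt (phi_strictAntiOn hint hφ hψpos hmono).antitoneOn hφhat ht hs).le
  rwa [hφ_add, (hφhat t ht).2, add_sub_cancel_left] at hmem

end Phi

/-- In the critical case, `(φ̂(t) − φ̂(t + φ(λ)))/ψ(φ̂(t)) → φ(λ)` as `t → ∞`. -/
theorem stmt5 (σ : ℝ) (π : Measure ℝ) (ψ φ φhat : ℝ → ℝ)
    (hψ : LevyMechanism 0 σ π ψ)
    (hψpos : ∀ l > (0 : ℝ), 0 < ψ l)
    (hint : ∀ l > (0 : ℝ), IntegrableOn (fun v => 1 / ψ v) (Set.Ioi l))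
    (hφ : ∀ l > (0 : ℝ), φ l = ∫ v in Set.Ioi l, 1 / ψ v)
    (hφhat : ∀ t > (0 : ℝ), 0 < φhat t ∧ φ (φhat t) = t) :
    ∀ l > (0 : ℝ),
      Tendsto (fun t => (φhat t - φhat (t + φ l)) / ψ (φhat t)) atTop
        (nhds (φ l)) := by
  intro l hl
  have hmono : MonotoneOn ψ (Ioi 0) := (hψ.monotoneOn le_rfl).mono Ioi_subset_Ici_self
  have hanti := (phi_strictAntiOn hint hφ hψpos hmono).antitoneOn
  have hs : 0 < φ l := phi_pos hint hφ hψpos hmono hl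
  have hratio : Tendsto (fun t => ψ (2 * φhat t) / φhat t) atTop (𝓝 0) := by
    simpa [Function.comp_def] using (tendsto_apply_two_mul_div hψ.tendsto_div_nhdsGT_zero).comp
      (tendsto_phihat_nhdsGT_zero hanti hφhat)
  have hlower : Tendsto (fun t => φ l - φ l ^ 2 * (ψ (2 * φhat t) / φhat t)) atTop (𝓝 (φ l)) := by
    simpa using (hratio.const_mul (φ l ^ 2)).const_sub (φ l)
  refine tendsto_of_tendsto_of_tendsto_of_le_of_le' hlower tendsto_const_nhds ?_ ?_ <;>
    filter_upwards [eventually_gt_atTop 0] with t ht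
  · exact hψ.convexOn.sub_sq_mul_le_sub_div hψpos (hφhat _ (by linarith)).1
      (phihat_add_lt hanti hφhat ht hs)
      (mem_Icc_phihat_sub_phihat hint hφ hψpos hmono hφhat ht hs)
  · exact (mem_Icc_phihat_sub_phihat hint hφ hψpos hmono hφhat ht hs).1
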